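/- Let n ≥ 1, let v : 𝔹ₙ → ℂ be of class C¹ in the real sense, and let z, ζ ∈ 𝔹ₙ. Then ∑_{j=1}^n (∂̄_j v)(ζ)·conj(ζ_j) = −(1/(1−⟨z,ζ⟩))·∑_{j=1}^n (∂̄_j (v ∘ φ_z))(φ_z(ζ))·conj( z_j − (φ_z(ζ))_j ). -/

import Mathlib

/-!
The sum `∑ⱼ ∂̄ⱼ f(p) · conj hⱼ` is the pairing `½ (L h + i L (i h))` of `L = Df(p)` with `h`;
it is conjugate-linear in `h` and turns composition with a `ℂ`-linear map `D` into evaluation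
at `D h`. Since `φ_z` is an involution, the chain rule at `w = φ_z(ζ)` makes the right-hand
sum the pairing of `Dv(ζ)` with `Dφ_z(w)(z - w)`. Now `φ_z(u) = (1 - ⟨u,z⟩)⁻¹ (z + B u)` with
`B` linear and `z + B z = 0`, because `φ_z(z) = 0`; differentiating this quotient in the
direction `z - w` gives `-((1 - |z|²) / (1 - ⟨w,z⟩)) φ_z(w) = -(1 - ⟨ζ,z⟩) ζ`, and
conjugate-linearity finishes.
-/

open MeasureTheory
open scoped Classical

noncomputable instance {n : ℕ} : InnerProductSpace ℝ (EuclideanSpace ℂ (Fin n)) :=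
  InnerProductSpace.complexToReal

/-- The Hermitian inner product `⟨z,w⟩ = ∑ j, z j * conj (w j)` used in the paper. -/
noncomputable def hin {n : ℕ} (z w : EuclideanSpace ℂ (Fin n)) : ℂ :=
  ∑ j, z j * (starRingEnd ℂ) (w j)

/-- The orthogonal projection of `w` onto the complex line `ℂ z`. -/
noncomputable def projLine {n : ℕ} (z w : EuclideanSpace ℂ (Fin n)) :
    EuclideanSpace ℂ (Fin n) :=
  (hin w z / ((‖z‖ : ℂ) ^ 2)) • z

/-- The Möbius transform `φ_z` of the unit ball `𝔹ₙ`. -/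
noncomputable def mobius {n : ℕ} (z w : EuclideanSpace ℂ (Fin n)) :
    EuclideanSpace ℂ (Fin n) :=
  if z = 0 then -w
  else
    (1 - hin w z)⁻¹ •
      (z - projLine z w - ((Real.sqrt (1 - ‖z‖ ^ 2) : ℝ) : ℂ) • (w - projLine z w))

/-- The `j`-th Wirtinger derivative `∂̄_j v(z) = ½(∂v/∂x_j + i ∂v/∂y_j)`. -/
noncomputable def wdbar {n : ℕ} (v : EuclideanSpace ℂ (Fin n) → ℂ) (j : Fin n)
    (z : EuclideanSpace ℂ (Fin n)) : ℂ :=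
  (1 / 2 : ℂ) * (fderiv ℝ v z (EuclideanSpace.single j 1) +
    Complex.I * fderiv ℝ v z (EuclideanSpace.single j Complex.I))

open ComplexConjugate

section WirtingerPairing

variable {F G : Type*} [NormedAddCommGroup F] [NormedSpace ℝ F] [NormedSpace ℂ F]
  [IsScalarTower ℝ ℂ F] [NormedAddCommGroup G] [NormedSpace ℝ G] [NormedSpace ℂ G]
  [IsScalarTower ℝ ℂ G]

lemma ContinuousLinearMap.map_complex_smul (L : F →L[ℝ] ℂ) (c : ℂ) (h : F) :
    L (c • h) = c.re * L h + c.im * L (Complex.I • h) := by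
  have hc : c • h = c.re • h + c.im • (Complex.I • h) := by
    rw [← algebraMap_smul ℂ c.re h, ← algebraMap_smul ℂ c.im, smul_smul, ← add_smul,
      Complex.coe_algebraMap, Complex.re_add_im]
  rw [hc, map_add, L.map_smul, L.map_smul, Complex.real_smul, Complex.real_smul]

noncomputable def wirtingerPairing (L : F →L[ℝ] ℂ) : F →ₗ⋆[ℂ] ℂ where
  toFun h := (1 / 2 : ℂ) * (L h + Complex.I * L (Complex.I • h))
  map_add' h k := by simp only [smul_add, map_add]; ring
  map_smul' c h := by
    have hconj : conj c = c.re - c.im * Complex.I := by simp [Complex.ext_iff]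
    rw [smul_smul, L.map_complex_smul c h, L.map_complex_smul (Complex.I * c) h, smul_eq_mul,
      hconj]
    simp only [Complex.mul_re, Complex.mul_im, Complex.I_re, Complex.I_im]
    push_cast
    linear_combination (1 / 2 : ℂ) * c.im * L (Complex.I • h) * Complex.I_sq

lemma wirtingerPairing_comp (L : G →L[ℝ] ℂ) (D : F →L[ℂ] G) (h : F) :
    wirtingerPairing (L.comp (D.restrictScalars ℝ)) h = wirtingerPairing L (D h) := by
  simp [wirtingerPairing]

end WirtingerPairing

section Coordinates

variable {n : ℕ}

lemma wdbar_eq_wirtingerPairing (f : EuclideanSpace ℂ (Fin n) → ℂ) (j : Fin n)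
    (p : EuclideanSpace ℂ (Fin n)) :
    wdbar f j p = wirtingerPairing (fderiv ℝ f p) (EuclideanSpace.single j 1) := by
  have : EuclideanSpace.single j Complex.I = Complex.I • EuclideanSpace.single j (1 : ℂ) := by
    ext i
    simp
  rw [wdbar, this]
  rfl

lemma sum_wdbar_mul_conj (f : EuclideanSpace ℂ (Fin n) → ℂ) (p h : EuclideanSpace ℂ (Fin n)) :
    ∑ j, wdbar f j p * conj (h j) = wirtingerPairing (fderiv ℝ f p) h := by
  conv_rhs => rw [← (EuclideanSpace.basisFun (Fin n) ℂ).sum_repr h]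
  simp [map_sum, map_smulₛₗ, wdbar_eq_wirtingerPairing, mul_comm]

end Coordinates

section LinearFractional

variable {𝕜 E F : Type*} [NontriviallyNormedField 𝕜] [NormedAddCommGroup E] [NormedSpace 𝕜 E]
  [NormedAddCommGroup F] [NormedSpace 𝕜 F]

lemma exists_hasFDerivAt_inv_smul_affine (T : E →L[𝕜] 𝕜) (B : E →L[𝕜] F) (a : F) {p w : E}
    (hp : a + B p = 0) (hw : 1 - T w ≠ 0) :
    ∃ D : E →L[𝕜] F, HasFDerivAt (fun u => (1 - T u)⁻¹ • (a + B u)) D w ∧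
      D (p - w) = -((1 - T p) / (1 - T w)) • ((1 - T w)⁻¹ • (a + B w)) := by
  have hinv : HasFDerivAt (fun u => (1 - T u)⁻¹) (((1 - T w) ^ 2)⁻¹ • T) w := by
    simpa [Function.comp_def] using
      (hasDerivAt_inv hw).comp_hasFDerivAt w (T.hasFDerivAt.const_sub 1)
  have haff : HasFDerivAt (fun u => a + B u) B w := B.hasFDerivAt.const_add a
  refine ⟨_, hinv.smul haff, ?_⟩
  have hBp : B p = -a := eq_neg_of_add_eq_zero_right hp
  simp only [add_apply, smul_apply, ContinuousLinearMap.smulRight_apply, map_sub, hBp,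
    smul_eq_mul]
  match_scalars <;> field_simp <;> ring

end LinearFractional

section Mobius

variable {n : ℕ}

local notation "𝔼" => EuclideanSpace ℂ (Fin n)

lemma hin_eq_inner (z w : 𝔼) : hin z w = inner ℂ w z := by
  simp [hin, PiLp.inner_apply]

lemma conj_hin (z w : 𝔼) : conj (hin z w) = hin w z := by
  rw [hin_eq_inner, hin_eq_inner, inner_conj_symm]

lemma one_sub_hin_ne_zero {z w : 𝔼} (hz : ‖z‖ < 1) (hw : ‖w‖ < 1) : 1 - hin z w ≠ 0 := by
  have hlt : ‖hin z w‖ < 1 := by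
    rw [hin_eq_inner]
    calc ‖inner ℂ w z‖ ≤ ‖w‖ * ‖z‖ := norm_inner_le_norm w z
      _ < 1 := by nlinarith [norm_nonneg z, norm_nonneg w]
  intro h
  rw [← sub_eq_zero.mp h, norm_one] at hlt
  exact lt_irrefl 1 hlt

noncomputable def mobiusScale (z : 𝔼) : ℂ := (Real.sqrt (1 - ‖z‖ ^ 2) : ℝ)

-- At `z = 0` this is the junk value `0`, which keeps `mobius_apply` valid there.
noncomputable def mobiusCoeff (z : 𝔼) : ℂ := (1 - mobiusScale z) / (‖z‖ : ℂ) ^ 2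

lemma mobiusScale_sq {z : 𝔼} (hz : ‖z‖ ≤ 1) : mobiusScale z ^ 2 = 1 - (‖z‖ : ℂ) ^ 2 := by
  have h : Real.sqrt (1 - ‖z‖ ^ 2) ^ 2 = 1 - ‖z‖ ^ 2 :=
    Real.sq_sqrt (by nlinarith [norm_nonneg z])
  rw [mobiusScale]
  exact_mod_cast h

lemma mobiusCoeff_mul_norm_sq (z : 𝔼) : mobiusCoeff z * (‖z‖ : ℂ) ^ 2 = 1 - mobiusScale z := by
  rcases eq_or_ne z 0 with rfl | hz
  · simp [mobiusScale]
  · exact div_mul_cancel₀ _ (by simpa using hz)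

lemma mobiusCoeff_mul_one_add {z : 𝔼} (hz0 : z ≠ 0) (hz : ‖z‖ ≤ 1) :
    mobiusCoeff z * (1 + mobiusScale z) = 1 := by
  have hnorm : (‖z‖ : ℂ) ^ 2 ≠ 0 := by simpa using hz0
  have hfactor : (1 - mobiusScale z) * (1 + mobiusScale z) = (‖z‖ : ℂ) ^ 2 := by
    linear_combination -mobiusScale_sq hz
  rw [mobiusCoeff, div_mul_eq_mul_div, hfactor, div_self hnorm]

lemma mobius_apply (z w : 𝔼) :
    mobius z w = (1 - hin w z)⁻¹ • ((1 - mobiusCoeff z * hin w z) • z - mobiusScale z • w) := by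
  rw [mobius, projLine]
  split_ifs with hz
  · simp [hz, hin, mobiusScale]
  · have hnorm : (‖z‖ : ℂ) ^ 2 ≠ 0 := by simpa using hz
    rw [mobiusCoeff, mobiusScale]
    match_scalars
    · field_simp
      ring
    · field_simp

lemma one_sub_hin_mobius {z w : 𝔼} (hw : 1 - hin w z ≠ 0) :
    1 - hin (mobius z w) z = (1 - (‖z‖ : ℂ) ^ 2) / (1 - hin w z) := by
  rw [eq_div_iff hw, hin_eq_inner, mobius_apply, inner_smul_right, inner_sub_right,
    inner_smul_right, inner_smul_right, inner_self_eq_norm_sq_to_K, ← hin_eq_inner]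
  field_simp
  linear_combination hin w z * mobiusCoeff_mul_norm_sq z

lemma mobius_mobius {z w : 𝔼} (hz : ‖z‖ < 1) (hw : 1 - hin w z ≠ 0) :
    mobius z (mobius z w) = w := by
  rcases eq_or_ne z 0 with rfl | hz0
  · simp [mobius]
  have hs : mobiusScale z ^ 2 = 1 - (‖z‖ : ℂ) ^ 2 := mobiusScale_sq hz.le
  have hs0 : mobiusScale z ≠ 0 := by
    rw [mobiusScale, Complex.ofReal_ne_zero, Real.sqrt_ne_zero']
    nlinarith [norm_nonneg z]
  have hc : mobiusCoeff z * (1 + mobiusScale z) = 1 := mobiusCoeff_mul_one_add hz0 hz.le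
  have hb : hin (mobius z w) z = 1 - mobiusScale z ^ 2 / (1 - hin w z) := by
    rw [hs, ← one_sub_hin_mobius hw, sub_sub_cancel]
  rw [mobius_apply z (mobius z w), hb, mobius_apply z w]
  match_scalars
  · field_simp
    linear_combination (hin w z - 1 + mobiusScale z) * hc
  · field_simp
    ring

lemma exists_hasFDerivAt_mobius {z w : 𝔼} (hw : 1 - hin w z ≠ 0) :
    ∃ D : 𝔼 →L[ℂ] 𝔼, HasFDerivAt (mobius z) D w ∧
      D (z - w) = -((1 - (‖z‖ : ℂ) ^ 2) / (1 - hin w z)) • mobius z w := by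
  set T : 𝔼 →L[ℂ] ℂ := innerSL ℂ z
  set B : 𝔼 →L[ℂ] 𝔼 :=
    -(mobiusCoeff z • T).smulRight z - mobiusScale z • ContinuousLinearMap.id ℂ 𝔼
  have hT : ∀ u, T u = hin u z := fun u => by rw [hin_eq_inner]; rfl
  have hTz : T z = (‖z‖ : ℂ) ^ 2 := inner_self_eq_norm_sq_to_K z
  have hmobius : mobius z = fun u => (1 - T u)⁻¹ • (z + B u) := by
    ext1 u
    rw [mobius_apply, hT]
    congr 1
    simp only [B, sub_apply, neg_apply, smul_apply, ContinuousLinearMap.smulRight_apply,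
      ContinuousLinearMap.id_apply, hT, smul_eq_mul]
    module
  have hzero : z + B z = 0 := by
    simp only [B, sub_apply, neg_apply, smul_apply, ContinuousLinearMap.smulRight_apply,
      ContinuousLinearMap.id_apply, hTz, smul_eq_mul, mobiusCoeff_mul_norm_sq]
    module
  rw [hmobius, ← hT, ← hTz]
  exact exists_hasFDerivAt_inv_smul_affine T B z hzero (hT w ▸ hw)

lemma exists_hasFDerivAt_mobius_mobius {z ζ : 𝔼} (hz : ‖z‖ < 1) (hζ : 1 - hin ζ z ≠ 0) :
    ∃ D : 𝔼 →L[ℂ] 𝔼, HasFDerivAt (mobius z) D (mobius z ζ) ∧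
      D (z - mobius z ζ) = -(1 - hin ζ z) • ζ := by
  have hnorm : 1 - (‖z‖ : ℂ) ^ 2 ≠ 0 := by
    have : 0 < 1 - ‖z‖ ^ 2 := by nlinarith [norm_nonneg z]
    exact_mod_cast this.ne'
  have hw := one_sub_hin_mobius hζ
  obtain ⟨D, hD, hDz⟩ := exists_hasFDerivAt_mobius (hw ▸ div_ne_zero hnorm hζ)
  refine ⟨D, hD, ?_⟩
  rw [hDz, hw, div_div_cancel₀ hnorm, mobius_mobius hz hζ]

end Mobius

theorem stmt17_general (n : ℕ) (v : EuclideanSpace ℂ (Fin n) → ℂ)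
    (hv : ContDiffOn ℝ 1 v (Metric.ball 0 1))
    (z ζ : EuclideanSpace ℂ (Fin n))
    (hz : z ∈ Metric.ball (0 : EuclideanSpace ℂ (Fin n)) 1)
    (hζ : ζ ∈ Metric.ball (0 : EuclideanSpace ℂ (Fin n)) 1) :
    (∑ j, wdbar v j ζ * (starRingEnd ℂ) (ζ j))
      = -(1 - hin z ζ)⁻¹ *
          ∑ j, wdbar (v ∘ mobius z) j (mobius z ζ) *
            (starRingEnd ℂ) (z j - mobius z ζ j) := by
  have hvζ : DifferentiableAt ℝ v ζ :=
    (hv.differentiableOn one_ne_zero).differentiableAt (Metric.isOpen_ball.mem_nhds hζ)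
  rw [mem_ball_zero_iff] at hz hζ
  have hζz : 1 - hin ζ z ≠ 0 := one_sub_hin_ne_zero hζ hz
  have hzζ : 1 - hin z ζ ≠ 0 := one_sub_hin_ne_zero hz hζ
  obtain ⟨D, hD, hDz⟩ := exists_hasFDerivAt_mobius_mobius hz hζz
  have hv' : HasFDerivAt v (fderiv ℝ v ζ) (mobius z (mobius z ζ)) := by
    rw [mobius_mobius hz hζz]
    exact hvζ.hasFDerivAt
  simp_rw [← PiLp.sub_apply]
  rw [sum_wdbar_mul_conj, sum_wdbar_mul_conj, (hv'.comp _ (hD.restrictScalars ℝ)).fderiv,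
    wirtingerPairing_comp, hDz, map_smulₛₗ, map_neg, map_sub, map_one, conj_hin, smul_eq_mul]
  field_simp

/-- Lemma 8.6: for `v ∈ C¹(𝔹ₙ)` (in the real sense) and `z, ζ ∈ 𝔹ₙ`,
`⟨∂̄v(ζ), ζ⟩ = −⟨∂̄(v∘φ_z)(φ_z(ζ)), z − φ_z(ζ)⟩ / (1 − ⟨z,ζ⟩)`. -/
theorem stmt17 (n : ℕ) (hn : 1 ≤ n) (v : EuclideanSpace ℂ (Fin n) → ℂ)
    (hv : ContDiffOn ℝ 1 v (Metric.ball 0 1))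
    (z ζ : EuclideanSpace ℂ (Fin n))
    (hz : z ∈ Metric.ball (0 : EuclideanSpace ℂ (Fin n)) 1)
    (hζ : ζ ∈ Metric.ball (0 : EuclideanSpace ℂ (Fin n)) 1) :
    (∑ j, wdbar v j ζ * (starRingEnd ℂ) (ζ j))
      = -(1 - hin z ζ)⁻¹ *
          ∑ j, wdbar (v ∘ mobius z) j (mobius z ζ) *
            (starRingEnd ℂ) (z j - mobius z ζ j) :=
  stmt17_general n v hv z ζ hz hζ
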